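/- Let d ≥ 2 be an integer, set e = d if d ≡ 0 (mod 4), e = 2d if d is odd, and e = d/2 if d ≡ 2 (mod 4), and let n ≥ 0 be an integer. Then B_d(∏_{i=n+1}^{n+d}(q^i − 1)) = 2nd + d² + 3d/2, and B_d(∏_{i=n+1}^{n+e}((−q)^i − 1)) = 2ne + e(e+1) + d/2. -/

import Mathlib

open Polynomial

/-- `φ_d(r)`: for `r = 1` it is `1/2`; for `r ≥ 2` it is the number of integers `j` with
`1 ≤ j ≤ r / d` that are coprime to `r`. -/
noncomputable def phiD (d r : ℕ) : ℚ :=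
  if r = 1 then 1 / 2
  else (((Finset.Icc 1 (r / d)).filter fun j => Nat.gcd j r = 1).card : ℚ)

/-- `B_d(f)` for `f` a rational constant times a power of `q` times a product of cyclotomic
polynomials: if `f = c·q^a·∏_{r≥1} Φ_r^{m_r}`, then `B_d(f) = 2a + Σ_r m_r·(φ(r) + d·φ_d(r))`.
The exponents are recovered as multiplicities; since `Φ_r ∣ f` forces
`φ(r) ≤ deg f` and `r ≤ 2·φ(r)²`, the sum below captures every relevant `r`. -/
noncomputable def Bd (d : ℕ) (f : Polynomial ℚ) : ℚ :=
  2 * (multiplicity X f : ℚ) +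
    ∑ r ∈ Finset.Icc 1 (2 * f.natDegree ^ 2 + 1),
      (multiplicity (cyclotomic r ℚ) f : ℚ) * ((Nat.totient r : ℚ) + d * phiD d r)

/-- `e = d` if `4 ∣ d`, `e = 2d` if `d` is odd, and `e = d/2` if `d ≡ 2 (mod 4)`. -/
def eOf (d : ℕ) : ℕ := if d % 4 = 0 then d else if d % 2 = 1 then 2 * d else d / 2

/-
`B_d` is additive on nonzero polynomials: a cyclotomic factor `Φ_r ∣ f` has
`r ≤ 2 φ(r)² ≤ 2 (deg f)²`, so the truncated sum defining `B_d` sees all of them. Since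
`B_d(Φ_r) = φ(r) + d φ_d(r)`, `q^i - 1 = ∏_{r ∣ i} Φ_r`, `Σ_{r ∣ i} φ(r) = i` and
`Σ_{r ∣ i} φ_d(r) = ⌊i/d⌋ + 1/2`, we get `β(i) := B_d(q^i - 1) = i + d⌊i/d⌋ + d/2`; for odd `i`,
`(q^i - 1)·(1 - (-q)^i) = q^{2i} - 1` gives `B_d((-q)^i - 1) = β(2i) - β(i)`.
Both `w = β` with `E = d` and `w = B_d((-q)^• - 1)` with `E = e` satisfy `w(i + E) = w(i) + 2E`
and `w(k) + w(E - k) = 2E` for `0 < k < E` (this is what the choice of `e` achieves), and any such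
`w` sums over `E` consecutive integers `n+1, …, n+E` to `2nE + E(E+1) + w(0)`, where `w(0) = d/2`.
-/

-- The factor `gcd 2 n` makes the bound multiplicative over coprime factors.
open Nat in
lemma le_totient_sq_mul_gcd_two (n : ℕ) : n ≤ φ n ^ 2 * Nat.gcd 2 n := by
  induction n using Nat.recOnPosPrimePosCoprime with
  | zero => simp
  | one => simp
  | prime_pow p k hp hk =>
    obtain ⟨j, rfl⟩ := Nat.exists_eq_add_of_lt hk
    rw [zero_add, Nat.totient_prime_pow_succ hp]
    rcases hp.eq_two_or_odd' with rfl | hodd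
    · rw [Nat.gcd_eq_left (dvd_pow_self 2 (Nat.succ_ne_zero j))]
      calc 2 ^ (j + 1) ≤ 2 ^ (j + j + 1) := Nat.pow_le_pow_right two_pos (by omega)
        _ = _ := by ring
    · rw [(Nat.coprime_two_left.2 hodd.pow).gcd_eq_one]
      have hp_le : p ≤ (p - 1) ^ 2 := by
        obtain ⟨m, rfl⟩ := hodd
        have : 1 ≤ m := by have := hp.two_le; omega
        rw [show 2 * m + 1 - 1 = 2 * m by omega]; nlinarith
      calc p ^ (j + 1) = p ^ j * p := pow_succ p j
        _ ≤ p ^ j * (p ^ j * (p - 1) ^ 2) :=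
          Nat.mul_le_mul_left _ (le_mul_of_one_le_of_le (Nat.one_le_pow _ _ hp.pos) hp_le)
        _ = _ := by ring
  | coprime a b _ _ hab iha ihb =>
    rw [Nat.totient_mul hab, Nat.Coprime.gcd_mul 2 hab]
    calc a * b ≤ (φ a ^ 2 * Nat.gcd 2 a) * (φ b ^ 2 * Nat.gcd 2 b) := Nat.mul_le_mul iha ihb
      _ = _ := by ring

open Nat in
lemma le_two_mul_totient_sq (n : ℕ) : n ≤ 2 * φ n ^ 2 :=
  (le_totient_sq_mul_gcd_two n).trans <| by
    rw [mul_comm]; exact Nat.mul_le_mul_right _ (Nat.le_of_dvd two_pos (Nat.gcd_dvd_left 2 n))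

section Bd
variable (d : ℕ)

lemma le_two_mul_natDegree_sq_of_cyclotomic_dvd {f : ℚ[X]} (hf : f ≠ 0) {r : ℕ}
    (hr : cyclotomic r ℚ ∣ f) : r ≤ 2 * f.natDegree ^ 2 :=
  (le_two_mul_totient_sq r).trans <| by
    have := natDegree_le_of_dvd hr hf
    rw [natDegree_cyclotomic] at this
    gcongr

lemma Bd_eq_sum_Icc_of_le {f : ℚ[X]} (hf : f ≠ 0) {N : ℕ}
    (hN : 2 * f.natDegree ^ 2 + 1 ≤ N) :
    Bd d f = 2 * (multiplicity X f : ℚ) + ∑ r ∈ Finset.Icc 1 N,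
      (multiplicity (cyclotomic r ℚ) f : ℚ) * ((Nat.totient r : ℚ) + d * phiD d r) := by
  rw [Bd, Finset.sum_subset (Finset.Icc_subset_Icc_right hN)]
  intro r hrN hr
  simp only [Finset.mem_Icc, not_and, not_le] at hrN hr
  have : ¬ cyclotomic r ℚ ∣ f := fun h =>
    (le_two_mul_natDegree_sq_of_cyclotomic_dvd hf h).not_gt (by linarith [hr hrN.1])
  rw [multiplicity_eq_zero.2 this, Nat.cast_zero, zero_mul]

lemma Bd_mul {f g : ℚ[X]} (hf : f ≠ 0) (hg : g ≠ 0) : Bd d (f * g) = Bd d f + Bd d g := by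
  have hmul : ∀ p : ℚ[X], Prime p →
      multiplicity p (f * g) = multiplicity p f + multiplicity p g := fun p hp =>
    multiplicity_mul hp (.of_prime_left hp (mul_ne_zero hf hg))
  have hdeg := natDegree_mul hf hg
  have hfN : 2 * f.natDegree ^ 2 + 1 ≤ 2 * (f * g).natDegree ^ 2 + 1 := by
    rw [hdeg]; gcongr; omega
  have hgN : 2 * g.natDegree ^ 2 + 1 ≤ 2 * (f * g).natDegree ^ 2 + 1 := by
    rw [hdeg]; gcongr; omega
  rw [Bd, Bd_eq_sum_Icc_of_le d hf hfN, Bd_eq_sum_Icc_of_le d hg hgN, hmul X prime_X,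
    Nat.cast_add, mul_add 2, add_add_add_comm, ← Finset.sum_add_distrib]
  congr 1
  refine Finset.sum_congr rfl fun r hr => ?_
  rw [hmul _ (cyclotomic.irreducible_rat (Finset.mem_Icc.1 hr).1).prime, Nat.cast_add, add_mul]

lemma Bd_neg (f : ℚ[X]) : Bd d (-f) = Bd d f := by
  simp only [Bd, multiplicity_neg, natDegree_neg]

lemma Bd_one : Bd d 1 = 0 := by
  have h1 : ¬ IsUnit (X - 1 : ℚ[X]) := by simpa using not_isUnit_X_sub_C (1 : ℚ)
  simp [Bd, multiplicity_of_one_right, not_isUnit_X, h1]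

lemma Bd_prod {ι : Type*} (s : Finset ι) (g : ι → ℚ[X]) (hg : ∀ i ∈ s, g i ≠ 0) :
    Bd d (∏ i ∈ s, g i) = ∑ i ∈ s, Bd d (g i) := by
  classical
  induction s using Finset.induction_on with
  | empty => simp [Bd_one]
  | insert a s ha ih =>
    rw [Finset.prod_insert ha, Finset.sum_insert ha, Bd_mul d (hg a (by simp))
      (Finset.prod_ne_zero_iff.2 fun i hi => hg i (by simp [hi])),
      ih fun i hi => hg i (by simp [hi])]

lemma Bd_cyclotomic {s : ℕ} (hs : 0 < s) :
    Bd d (cyclotomic s ℚ) = Nat.totient s + d * phiD d s := by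
  have hX : ¬ X ∣ cyclotomic s ℚ := fun h => by
    simpa [X_dvd_iff, hs.ne] using h.trans (cyclotomic.dvd_X_pow_sub_one s ℚ)
  rw [Bd, multiplicity_eq_zero.2 hX, Finset.sum_eq_single s]
  · rw [multiplicity_self]; push_cast; ring
  · intro r hr hrs
    rw [multiplicity_eq_zero.2, Nat.cast_zero, zero_mul]
    intro h
    refine hrs (cyclotomic_injective (eq_of_monic_of_associated (cyclotomic.monic r ℚ)
      (cyclotomic.monic s ℚ) ?_))
    exact (cyclotomic.irreducible_rat (Finset.mem_Icc.1 hr).1).associated_of_dvd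
      (cyclotomic.irreducible_rat hs) h
  · rw [Finset.mem_Icc, natDegree_cyclotomic]
    exact fun hs' => absurd ⟨hs, (le_two_mul_totient_sq s).trans (Nat.le_succ _)⟩ hs'

end Bd

lemma card_filter_gcd_eq_mul {g x D : ℕ} (hg : 0 < g) (hD : 0 < D) :
    ((Finset.Icc 1 (g * x / D)).filter fun j => Nat.gcd j (g * x) = g).card =
      ((Finset.Icc 1 (x / D)).filter fun k => Nat.gcd k x = 1).card := by
  symm
  refine Finset.card_bij (fun k _ => g * k) ?_
    (fun a _ b _ h => Nat.eq_of_mul_eq_mul_left hg h) ?_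
  · intro k hk
    simp only [Finset.mem_filter, Finset.mem_Icc] at hk ⊢
    refine ⟨⟨Nat.mul_pos hg hk.1.1, ?_⟩, by rw [Nat.gcd_mul_left, hk.2, mul_one]⟩
    rw [Nat.le_div_iff_mul_le hD, mul_assoc]
    exact Nat.mul_le_mul_left g ((Nat.le_div_iff_mul_le hD).1 hk.1.2)
  · intro j hj
    simp only [Finset.mem_filter, Finset.mem_Icc] at hj
    obtain ⟨⟨hj1, hjx⟩, hgcd⟩ := hj
    obtain ⟨k, rfl⟩ : g ∣ j := hgcd ▸ Nat.gcd_dvd_left j (g * x)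
    rw [Nat.gcd_mul_left, mul_eq_left₀ hg.ne'] at hgcd
    rw [Nat.le_div_iff_mul_le hD, mul_assoc] at hjx
    refine ⟨k, ?_, rfl⟩
    simp only [Finset.mem_filter, Finset.mem_Icc]
    exact ⟨⟨Nat.pos_of_mul_pos_left hj1,
      (Nat.le_div_iff_mul_le hD).2 (Nat.le_of_mul_le_mul_left hjx hg)⟩, hgcd⟩

-- Sort `j ∈ [1, m/D]` by `g = gcd j m`: the fibre over `g` is
-- `g • {k ∈ [1, (m/g)/D] | gcd k (m/g) = 1}`.
lemma sum_divisors_card_filter_coprime (m : ℕ) {D : ℕ} (hD : 0 < D) :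
    ∑ r ∈ m.divisors, ((Finset.Icc 1 (r / D)).filter fun j => Nat.gcd j r = 1).card =
      m / D := by
  rcases m.eq_zero_or_pos with rfl | hm
  · simp
  rw [← Nat.sum_div_divisors]
  calc _ = ∑ g ∈ m.divisors,
        ((Finset.Icc 1 (m / D)).filter fun j => Nat.gcd j m = g).card := by
        refine Finset.sum_congr rfl fun g hg => ?_
        obtain ⟨x, hx⟩ := Nat.dvd_of_mem_divisors hg
        have hgpos : 0 < g := Nat.pos_of_mem_divisors hg
        rw [hx, Nat.mul_div_cancel_left x hgpos, card_filter_gcd_eq_mul hgpos hD]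
    _ = (Finset.Icc 1 (m / D)).card := (Finset.card_eq_sum_card_fiberwise
        fun j _ => Nat.mem_divisors.2 ⟨Nat.gcd_dvd_right j m, hm.ne'⟩).symm
    _ = m / D := by simp

lemma sum_divisors_phiD {d m : ℕ} (hd : 2 ≤ d) (hm : 0 < m) :
    ∑ r ∈ m.divisors, phiD d r = (m / d : ℕ) + 1 / 2 := by
  have hsplit : ∀ r ∈ m.divisors, phiD d r =
      (((Finset.Icc 1 (r / d)).filter fun j => Nat.gcd j r = 1).card : ℚ) +
        if r = 1 then 1 / 2 else 0 := by
    intro r _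
    rcases eq_or_ne r 1 with rfl | hr
    · simp [phiD, Nat.div_eq_of_lt hd]
    · simp [phiD, hr]
  rw [Finset.sum_congr rfl hsplit, Finset.sum_add_distrib, ← Nat.cast_sum,
    sum_divisors_card_filter_coprime m (by omega), Finset.sum_ite_eq',
    if_pos (Nat.one_mem_divisors.2 hm.ne')]

def bdPowSubOne (d i : ℕ) : ℚ := i + d * (i / d : ℕ) + d / 2

lemma Bd_X_pow_sub_one {d i : ℕ} (hd : 2 ≤ d) (hi : 0 < i) :
    Bd d (X ^ i - 1) = bdPowSubOne d i := by
  rw [← prod_cyclotomic_eq_X_pow_sub_one hi, Bd_prod d _ _ fun s _ => cyclotomic_ne_zero s ℚ,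
    Finset.sum_congr rfl fun s hs => Bd_cyclotomic d (Nat.pos_of_mem_divisors hs),
    Finset.sum_add_distrib, ← Finset.mul_sum, sum_divisors_phiD hd hi]
  have : ∑ s ∈ i.divisors, (Nat.totient s : ℚ) = i := by exact_mod_cast Nat.sum_totient i
  rw [this, bdPowSubOne]; ring

def bdNegPowSubOne (d i : ℕ) : ℚ :=
  if Even i then bdPowSubOne d i else bdPowSubOne d (2 * i) - bdPowSubOne d i

lemma Bd_neg_X_pow_sub_one {d i : ℕ} (hd : 2 ≤ d) (hi : 0 < i) :
    Bd d ((-X) ^ i - 1) = bdNegPowSubOne d i := by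
  rcases Nat.even_or_odd i with heven | hodd
  · rw [heven.neg_pow, bdNegPowSubOne, if_pos heven, Bd_X_pow_sub_one hd hi]
  · have hfactor : (X ^ i - 1 : ℚ[X]) * -((-X) ^ i - 1) = X ^ (2 * i) - 1 := by
      rw [hodd.neg_pow]; ring
    have hne : (X ^ i - 1 : ℚ[X]) * -((-X) ^ i - 1) ≠ 0 := by
      rw [hfactor, ← C_1]; exact X_pow_sub_C_ne_zero (by omega) 1
    have hBd := Bd_mul d (left_ne_zero_of_mul hne) (right_ne_zero_of_mul hne)
    rw [hfactor, Bd_neg, Bd_X_pow_sub_one hd hi, Bd_X_pow_sub_one hd (by omega)] at hBd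
    rw [bdNegPowSubOne, if_neg (Nat.not_even_iff_odd.2 hodd), hBd]
    ring

lemma bdPowSubOne_zero (d : ℕ) : bdPowSubOne d 0 = d / 2 := by simp [bdPowSubOne]

lemma bdNegPowSubOne_zero (d : ℕ) : bdNegPowSubOne d 0 = d / 2 := by
  simp [bdNegPowSubOne, bdPowSubOne_zero]

def ShiftReflect (w : ℕ → ℚ) (E : ℕ) (c : ℚ) : Prop :=
  (∀ i, w (i + E) = w i + c) ∧ ∀ k, 0 < k → k < E → w k + w (E - k) = c

lemma ShiftReflect.sum_Icc {w : ℕ → ℚ} {E : ℕ} {c : ℚ} (h : ShiftReflect w E c)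
    (hE : 0 < E) (n : ℕ) :
    ∑ i ∈ Finset.Icc (n + 1) (n + E), w i = w 0 + c * (n + (E + 1) / 2) := by
  rw [← Finset.Ico_add_one_right_eq_Icc, Finset.sum_Ico_eq_sum_range,
    show n + E + 1 - (n + 1) = E by omega]
  induction n with
  | zero =>
    obtain ⟨E, rfl⟩ := Nat.exists_eq_add_of_lt hE
    have hinner : 2 * ∑ k ∈ Finset.range E, w (1 + k) = E * c := by
      rw [two_mul]
      nth_rw 2 [← Finset.sum_range_reflect]
      rw [← Finset.sum_add_distrib, Finset.sum_congr rfl fun k hk => ?_, Finset.sum_const,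
        Finset.card_range, nsmul_eq_mul]
      have hkE := Finset.mem_range.1 hk
      have := h.2 (1 + k) (by omega) (by omega)
      rwa [show 1 + (E - 1 - k) = 0 + E + 1 - (1 + k) by omega]
    have hlast := h.1 0
    simp only [zero_add] at hlast ⊢
    rw [Finset.sum_range_succ, add_comm 1 E, hlast]
    push_cast
    linear_combination hinner / 2
  | succ n ih =>
    have hsucc := Finset.sum_range_succ (fun k => w (n + 1 + k)) E
    rw [Finset.sum_range_succ', h.1, add_zero] at hsucc
    have hshift : ∑ k ∈ Finset.range E, w (n + 1 + 1 + k) =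
        ∑ k ∈ Finset.range E, w (n + 1 + (k + 1)) :=
      Finset.sum_congr rfl fun k _ => congrArg w (by omega)
    rw [hshift]
    push_cast
    linear_combination hsucc + ih

section bdPowSubOne
variable {d : ℕ}

lemma bdPowSubOne_add_mul (hd : 0 < d) (i m : ℕ) :
    bdPowSubOne d (i + m * d) = bdPowSubOne d i + 2 * m * d := by
  simp only [bdPowSubOne, Nat.add_mul_div_right i m hd]
  push_cast; ring

lemma bdPowSubOne_add_bdPowSubOne_sub (hd : 0 < d) {j m : ℕ} (hj : j ≤ m * d) :
    bdPowSubOne d j + bdPowSubOne d (m * d - j) = 2 * m * d + if d ∣ j then d else 0 := by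
  have hdiv := Nat.add_div (a := j) (b := m * d - j) hd
  rw [Nat.add_sub_cancel' hj, Nat.mul_div_cancel m hd] at hdiv
  have hcarry : d ≤ j % d + (m * d - j) % d ↔ ¬ d ∣ j := by
    have hsum : d ∣ j % d + (m * d - j) % d := by
      rw [Nat.dvd_iff_mod_eq_zero, ← Nat.add_mod, Nat.add_sub_cancel' hj, Nat.mul_mod_left]
    rw [Nat.dvd_iff_mod_eq_zero]
    constructor
    · intro h h0
      rw [h0, Nat.dvd_iff_mod_eq_zero.1 (Nat.dvd_sub (dvd_mul_left d m)
        (Nat.dvd_of_mod_eq_zero h0))] at h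
      omega
    · intro h0
      exact Nat.le_of_dvd (by omega) hsum
  have hdivQ : (m : ℚ) = (j / d : ℕ) + ((m * d - j) / d : ℕ) + if d ∣ j then 0 else 1 := by
    rw [congrArg (Nat.cast (R := ℚ)) hdiv]
    by_cases h : d ∣ j <;> simp [h, hcarry]
  simp only [bdPowSubOne, Nat.cast_sub hj]
  push_cast
  split_ifs at hdivQ ⊢ <;> linear_combination -(d : ℚ) * hdivQ

-- Hermite's identity `⌊x⌋ = ⌊x/2⌋ + ⌊(x+1)/2⌋` at `x = ⌊i/e⌋`.
lemma bdPowSubOne_add_bdPowSubOne_add_half {e : ℕ} (he : 0 < e) (i : ℕ) :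
    bdPowSubOne (2 * e) i + bdPowSubOne (2 * e) (i + e) =
      bdPowSubOne (2 * e) (2 * i) + 2 * e := by
  have hdiv : i / (2 * e) + (i + e) / (2 * e) = 2 * i / (2 * e) := by
    rw [Nat.mul_div_mul_left i e two_pos, mul_comm, ← Nat.div_div_eq_div_mul,
      ← Nat.div_div_eq_div_mul, Nat.add_div_right i he]
    omega
  have hdivQ : ((i / (2 * e) : ℕ) : ℚ) + ((i + e) / (2 * e) : ℕ) = (2 * i / (2 * e) : ℕ) :=
    mod_cast hdiv
  simp only [bdPowSubOne]
  push_cast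
  linear_combination 2 * (e : ℚ) * hdivQ

lemma shiftReflect_bdPowSubOne (hd : 0 < d) : ShiftReflect (bdPowSubOne d) d (2 * d) := by
  refine ⟨fun i => by simpa using bdPowSubOne_add_mul hd i 1, fun k hk hkd => ?_⟩
  have := bdPowSubOne_add_bdPowSubOne_sub hd (j := k) (m := 1) (by omega)
  simpa [Nat.not_dvd_of_pos_of_lt hk hkd] using this

lemma shiftReflect_bdNegPowSubOne_of_four_dvd (hd : 0 < d) (h4 : 4 ∣ d) :
    ShiftReflect (bdNegPowSubOne d) d (2 * d) := by
  have hdeven : Even d := even_iff_two_dvd.2 (dvd_trans (by norm_num) h4)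
  refine ⟨fun i => ?_, fun k hk hkd => ?_⟩
  · have hpar : Even (i + d) ↔ Even i := by simp [Nat.even_add, hdeven]
    have h1 : bdPowSubOne d (i + d) = bdPowSubOne d i + 2 * d := by
      simpa using bdPowSubOne_add_mul hd i 1
    have h2 : bdPowSubOne d (2 * (i + d)) = bdPowSubOne d (2 * i) + 4 * d := by
      rw [show 2 * (i + d) = 2 * i + 2 * d by ring, bdPowSubOne_add_mul hd]; push_cast; ring
    by_cases he : Even i <;> simp only [bdNegPowSubOne, hpar, he, ↓reduceIte, h1, h2]
    ring
  · have hpar : Even (d - k) ↔ Even k := by simp [Nat.even_sub hkd.le, hdeven]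
    have h1 : bdPowSubOne d k + bdPowSubOne d (d - k) = 2 * d := by
      simpa [Nat.not_dvd_of_pos_of_lt hk hkd] using
        bdPowSubOne_add_bdPowSubOne_sub hd (j := k) (m := 1) (by omega)
    by_cases he : Even k
    · simpa only [bdNegPowSubOne, hpar, he, ↓reduceIte] using h1
    · have hnd : ¬ d ∣ 2 * k := fun h =>
        he (even_iff_two_dvd.2 (by have := dvd_trans h4 h; omega))
      have h2 : bdPowSubOne d (2 * k) + bdPowSubOne d (2 * (d - k)) = 4 * d := by
        have h := bdPowSubOne_add_bdPowSubOne_sub hd (j := 2 * k) (m := 2) (by omega)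
        rw [if_neg hnd, show 2 * d - 2 * k = 2 * (d - k) by omega] at h
        push_cast at h
        linear_combination h
      simp only [bdNegPowSubOne, hpar, he, ↓reduceIte]
      linear_combination h2 - h1

lemma shiftReflect_bdNegPowSubOne_of_odd (hodd : Odd d) :
    ShiftReflect (bdNegPowSubOne d) (2 * d) (2 * (2 * d)) := by
  have hd : 0 < d := hodd.pos
  refine ⟨fun i => ?_, fun k hk hkd => ?_⟩
  · have hpar : Even (i + 2 * d) ↔ Even i := by simp [Nat.even_add]
    have h1 : bdPowSubOne d (i + 2 * d) = bdPowSubOne d i + 4 * d := by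
      rw [bdPowSubOne_add_mul hd]; push_cast; ring
    have h2 : bdPowSubOne d (2 * (i + 2 * d)) = bdPowSubOne d (2 * i) + 8 * d := by
      rw [show 2 * (i + 2 * d) = 2 * i + 4 * d by ring, bdPowSubOne_add_mul hd]; push_cast; ring
    by_cases he : Even i <;> simp only [bdNegPowSubOne, hpar, he, ↓reduceIte, h1, h2] <;> ring
  · have hpar : Even (2 * d - k) ↔ Even k := by simp [Nat.even_sub hkd.le]
    have h1 := bdPowSubOne_add_bdPowSubOne_sub hd (j := k) (m := 2) (by omega)
    by_cases he : Even k
    · have hnd : ¬ d ∣ k := by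
        rintro ⟨t, rfl⟩
        have ht2 : t < 2 := Nat.lt_of_mul_lt_mul_left (a := d) (by linarith)
        obtain rfl : t = 1 := by have := Nat.pos_of_mul_pos_left hk; omega
        exact (Nat.not_even_iff_odd.2 hodd) (by simpa using he)
      simp only [bdNegPowSubOne, hpar, he, ↓reduceIte]
      rw [if_neg hnd] at h1
      push_cast at h1
      linear_combination h1
    · have h2 := bdPowSubOne_add_bdPowSubOne_sub hd (j := 2 * k) (m := 4) (by omega)
      rw [show 4 * d - 2 * k = 2 * (2 * d - k) by omega] at h2
      simp only [(Nat.coprime_two_right.2 hodd).dvd_mul_left] at h2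
      simp only [bdNegPowSubOne, hpar, he, ↓reduceIte]
      push_cast at h1 h2
      split_ifs at h1 h2 <;> linear_combination h2 - h1

lemma shiftReflect_bdNegPowSubOne_of_two_mul_odd {e : ℕ} (hodd : Odd e) :
    ShiftReflect (bdNegPowSubOne (2 * e)) e (2 * e) := by
  have he : 0 < e := hodd.pos
  have hhalf := bdPowSubOne_add_bdPowSubOne_add_half he
  refine ⟨fun i => ?_, fun k hk hke => ?_⟩
  · have hpar : Even (i + e) ↔ ¬ Even i := by
      simp [Nat.even_add, Nat.not_even_iff_odd.2 hodd]
    have h2 : bdPowSubOne (2 * e) (2 * (i + e)) = bdPowSubOne (2 * e) (2 * i) + 4 * e := by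
      rw [show 2 * (i + e) = 2 * i + 1 * (2 * e) by ring, bdPowSubOne_add_mul (by omega)]
      push_cast; ring
    by_cases hev : Even i <;>
      simp only [bdNegPowSubOne, hpar, hev, ↓reduceIte, not_true, not_false_eq_true, h2]
    · linear_combination -(hhalf i)
    · linear_combination hhalf i
  · have hpar : Even (e - k) ↔ ¬ Even k := by
      simp [Nat.even_sub hke.le, Nat.not_even_iff_odd.2 hodd]
    by_cases hev : Even k <;>
      simp only [bdNegPowSubOne, hpar, hev, ↓reduceIte, not_true, not_false_eq_true]
    · have h1 :=
        bdPowSubOne_add_bdPowSubOne_sub (d := 2 * e) (by omega) (j := k) (m := 1) (by omega)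
      rw [if_neg (Nat.not_dvd_of_pos_of_lt hk (by omega)), one_mul,
        show 2 * e - k = e - k + e by omega] at h1
      push_cast at h1
      linear_combination h1 - hhalf (e - k)
    · have h1 :=
        bdPowSubOne_add_bdPowSubOne_sub (d := 2 * e) (by omega) (j := e - k) (m := 1) (by omega)
      rw [if_neg (Nat.not_dvd_of_pos_of_lt (by omega) (by omega)), one_mul,
        show 2 * e - (e - k) = k + e by omega] at h1
      push_cast at h1
      linear_combination h1 - hhalf k

end bdPowSubOne

lemma shiftReflect_bdNegPowSubOne_eOf {d : ℕ} (hd : 2 ≤ d) :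
    ShiftReflect (bdNegPowSubOne d) (eOf d) (2 * eOf d) := by
  unfold eOf
  split_ifs with h4 h2
  · exact shiftReflect_bdNegPowSubOne_of_four_dvd (by omega) (Nat.dvd_of_mod_eq_zero h4)
  · exact_mod_cast shiftReflect_bdNegPowSubOne_of_odd (Nat.odd_iff.2 h2)
  · obtain ⟨e, rfl⟩ : ∃ e, d = 2 * e := ⟨d / 2, by omega⟩
    rw [Nat.mul_div_cancel_left e two_pos]
    exact shiftReflect_bdNegPowSubOne_of_two_mul_odd (Nat.odd_iff.2 (by omega))

lemma Bd_prod_Icc_of_shiftReflect {d E : ℕ} {g : ℕ → ℚ[X]} {w : ℕ → ℚ}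
    (hg : ∀ i, 0 < i → g i ≠ 0) (hBd : ∀ i, 0 < i → Bd d (g i) = w i)
    (hw : ShiftReflect w E (2 * E)) (hE : 0 < E) (n : ℕ) :
    Bd d (∏ i ∈ Finset.Icc (n + 1) (n + E), g i) = 2 * n * E + E * (E + 1) + w 0 := by
  have hpos : ∀ i ∈ Finset.Icc (n + 1) (n + E), 0 < i := fun i hi => by
    simp only [Finset.mem_Icc] at hi; omega
  rw [Bd_prod d _ _ fun i hi => hg i (hpos i hi),
    Finset.sum_congr rfl fun i hi => hBd i (hpos i hi), hw.sum_Icc hE n]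
  ring

/-- `B_d(∏_{i=n+1}^{n+d}(q^i − 1)) = 2nd + d² + 3d/2` and
`B_d(∏_{i=n+1}^{n+e}((−q)^i − 1)) = 2ne + e(e+1) + d/2`. -/
theorem Bd_prod_consecutive (d n : ℕ) (hd : 2 ≤ d) :
    Bd d (∏ i ∈ Finset.Icc (n + 1) (n + d), (X ^ i - 1))
      = 2 * (n : ℚ) * d + (d : ℚ) ^ 2 + 3 * (d : ℚ) / 2 ∧
    Bd d (∏ i ∈ Finset.Icc (n + 1) (n + eOf d), ((-X : Polynomial ℚ) ^ i - 1))
      = 2 * (n : ℚ) * (eOf d) + (eOf d : ℚ) * ((eOf d : ℚ) + 1) + (d : ℚ) / 2 := by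
  have heOf : 0 < eOf d := by unfold eOf; split_ifs <;> omega
  constructor
  · rw [Bd_prod_Icc_of_shiftReflect (fun i hi h => by simpa [hi.ne'] using congrArg (eval 0) h)
      (fun i hi => Bd_X_pow_sub_one hd hi) (shiftReflect_bdPowSubOne (by omega)) (by omega),
      bdPowSubOne_zero]
    ring
  · rw [Bd_prod_Icc_of_shiftReflect (fun i hi h => by simpa [hi.ne'] using congrArg (eval 0) h)
      (fun i hi => Bd_neg_X_pow_sub_one hd hi) (shiftReflect_bdNegPowSubOne_eOf hd) heOf,
      bdNegPowSubOne_zero]
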